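/- Let I ⊂ ℝ be a compact interval not containing 0, let μ > 0 and ε₀ > 0. If f ∈ L²(I) satisfies ∫_I f(t)(t − iε)^{−μ} dt = 0 for all ε ∈ (0, ε₀), then f = 0 almost everywhere on I. -/

import Mathlib

/-!
The transform `S_ν(z) = ∫ f(t) (t - z)^(-ν) dt` is holomorphic in `z` off the ray `[a, ∞)`,
with `S_ν' = ν S_{ν+1}`. Vanishing on the segment `i (0, ε₀)` forces `S_μ ≡ 0` by the identity
theorem, hence `S_{μ+n} ≡ 0` for all `n`. At a real point `c < a` this says that
`f(t) (t - c)^(-μ)` is orthogonal to every power of `(t - c)⁻¹`. Polynomials in `(t - c)⁻¹` are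
uniformly dense in `C(I)` (Weierstrass in the variable `s = (t - c)⁻¹`), so `f(t) (t - c)^(-μ)`,
and with it `f`, vanishes almost everywhere.
-/

open MeasureTheory Set Filter Complex Topology

/-- `ℂ` minus the ray `[a, ∞)`. -/
def slitPlaneAt (a : ℝ) : Set ℂ := {z | (a : ℂ) - z ∈ slitPlane}

lemma isOpen_slitPlaneAt (a : ℝ) : IsOpen (slitPlaneAt a) :=
  isOpen_slitPlane.preimage (by fun_prop)

lemma isPreconnected_slitPlaneAt (a : ℝ) : IsPreconnected (slitPlaneAt a) :=
  (Homeomorph.subLeft (a : ℂ)).isPreconnected_preimage.mpr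
    (starConvex_one_slitPlane.isPathConnected one_mem_slitPlane).isConnected.isPreconnected

lemma sub_mem_slitPlane_of_mem_slitPlaneAt {a t : ℝ} {z : ℂ} (hz : z ∈ slitPlaneAt a)
    (ht : a ≤ t) : (t : ℂ) - z ∈ slitPlane := by
  replace hz : (a : ℂ) - z ∈ slitPlane := hz
  rw [mem_slitPlane_iff] at hz ⊢
  simp only [sub_re, ofReal_re, sub_im, ofReal_im] at hz ⊢
  rcases hz with h | h
  · exact Or.inl (by linarith)
  · exact Or.inr h

lemma exists_pos_le_norm_sub_of_mem_slitPlaneAt {a : ℝ} {z : ℂ} (hz : z ∈ slitPlaneAt a) :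
    ∃ m > 0, ∀ t : ℝ, a ≤ t → m ≤ ‖(t : ℂ) - z‖ := by
  rcases mem_slitPlane_iff.mp hz with h | h
  · refine ⟨_, h, fun t ht => le_trans ?_ (re_le_norm _)⟩
    simp only [sub_re, ofReal_re]
    linarith
  · refine ⟨_, abs_pos.mpr h, fun t _ => le_of_eq_of_le ?_ (abs_im_le_norm _)⟩
    simp

lemma norm_cpow_neg_le {w : ℂ} {m ν : ℝ} (hm : 0 < m) (hw : m ≤ ‖w‖) (hν : 0 ≤ ν) :
    ‖w ^ (-(ν : ℂ))‖ ≤ m ^ (-ν) := by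
  rw [← ofReal_neg, norm_cpow_real]
  exact Real.rpow_le_rpow_of_nonpos hm hw (neg_nonpos.mpr hν)

noncomputable def stieltjesTransform (ρ : Measure ℝ) (f : ℝ → ℂ) (ν : ℝ) (z : ℂ) : ℂ :=
  ∫ t, f t * ((t : ℂ) - z) ^ (-(ν : ℂ)) ∂ρ

section StieltjesTransform

variable {ρ : Measure ℝ} {f : ℝ → ℂ} {a ν : ℝ}

lemma integrable_mul_sub_cpow_neg (hf : Integrable f ρ) (ha : ∀ᵐ t ∂ρ, a ≤ t) (hν : 0 ≤ ν)
    {z : ℂ} (hz : z ∈ slitPlaneAt a) :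
    Integrable (fun t => f t * ((t : ℂ) - z) ^ (-(ν : ℂ))) ρ := by
  obtain ⟨m, hm, hmz⟩ := exists_pos_le_norm_sub_of_mem_slitPlaneAt hz
  refine hf.mul_bdd (Measurable.aestronglyMeasurable (by fun_prop)) (c := m ^ (-ν)) ?_
  filter_upwards [ha] with t ht
  exact norm_cpow_neg_le hm (hmz t ht) hν

lemma hasDerivAt_stieltjesTransform (hf : Integrable f ρ) (ha : ∀ᵐ t ∂ρ, a ≤ t) (hν : 0 ≤ ν)
    {z₀ : ℂ} (hz₀ : z₀ ∈ slitPlaneAt a) :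
    HasDerivAt (stieltjesTransform ρ f ν) (ν * stieltjesTransform ρ f (ν + 1) z₀) z₀ := by
  obtain ⟨m, hm, hmz⟩ := exists_pos_le_norm_sub_of_mem_slitPlaneAt hz₀
  obtain ⟨r, hr, hball⟩ := Metric.isOpen_iff.mp (isOpen_slitPlaneAt a) z₀ hz₀
  set B := Metric.ball z₀ (min r (m / 2))
  have hB : ∀ z ∈ B, z ∈ slitPlaneAt a ∧ ∀ t : ℝ, a ≤ t → m / 2 ≤ ‖(t : ℂ) - z‖ := by
    intro z hz
    rw [Metric.mem_ball, dist_eq, lt_min_iff] at hz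
    refine ⟨hball (Metric.mem_ball.mpr (by rw [dist_eq]; exact hz.1)), fun t ht => ?_⟩
    have := norm_sub_le_norm_sub_add_norm_sub (t : ℂ) z z₀
    linarith [hmz t ht]
  have hexp : -(ν : ℂ) - 1 = -((ν + 1 : ℝ) : ℂ) := by push_cast; ring
  have key := hasDerivAt_integral_of_dominated_loc_of_deriv_le (μ := ρ) (x₀ := z₀)
    (F := fun z t => f t * ((t : ℂ) - z) ^ (-(ν : ℂ)))
    (F' := fun z t => ν * (f t * ((t : ℂ) - z) ^ (-((ν + 1 : ℝ) : ℂ))))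
    (bound := fun t => ν * (m / 2) ^ (-(ν + 1)) * ‖f t‖)
    (Metric.ball_mem_nhds z₀ (lt_min hr (half_pos hm)))
    (Eventually.of_forall fun _ =>
      hf.aestronglyMeasurable.mul (Measurable.aestronglyMeasurable (by fun_prop)))
    (integrable_mul_sub_cpow_neg hf ha hν hz₀)
    ((hf.aestronglyMeasurable.mul (Measurable.aestronglyMeasurable (by fun_prop))).const_mul _)
    ?_ (hf.norm.const_mul _) ?_
  · rw [stieltjesTransform, ← integral_const_mul]
    exact key.2
  · filter_upwards [ha] with t ht z hz
    rw [norm_mul, norm_mul, norm_real, Real.norm_of_nonneg hν, mul_comm ‖f t‖, ← mul_assoc]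
    gcongr
    exact norm_cpow_neg_le (half_pos hm) ((hB z hz).2 t ht) (by linarith)
  · filter_upwards [ha] with t ht z hz
    have hsub : HasDerivAt (fun z : ℂ => (t : ℂ) - z) (-1) z := by
      simpa using (hasDerivAt_id z).const_sub (t : ℂ)
    exact ((hsub.cpow_const (sub_mem_slitPlane_of_mem_slitPlaneAt (hB z hz).1 ht)).const_mul
      (f t)).congr_deriv (by rw [hexp]; ring)

lemma stieltjesTransform_eqOn_zero (hf : Integrable f ρ) (ha : ∀ᵐ t ∂ρ, a ≤ t) (hν : 0 ≤ ν)
    {ε₀ : ℝ} (hε₀ : 0 < ε₀) (h : ∀ ε ∈ Ioo (0 : ℝ) ε₀, stieltjesTransform ρ f ν (ε * I) = 0) :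
    EqOn (stieltjesTransform ρ f ν) 0 (slitPlaneAt a) := by
  have hanalytic : AnalyticOnNhd ℂ (stieltjesTransform ρ f ν) (slitPlaneAt a) :=
    DifferentiableOn.analyticOnNhd (fun z hz =>
      (hasDerivAt_stieltjesTransform hf ha hν hz).differentiableAt.differentiableWithinAt)
      (isOpen_slitPlaneAt a)
  set ε₁ := ε₀ / 2
  have hmem : ((ε₁ : ℝ) : ℂ) * I ∈ slitPlaneAt a :=
    mem_slitPlane_iff.mpr (Or.inr (by simp [ε₁, hε₀.ne']))
  have hline : Tendsto (fun ε : ℝ => (ε : ℂ) * I) (𝓝[≠] ε₁) (𝓝[≠] (ε₁ * I)) :=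
    tendsto_nhdsWithin_of_tendsto_nhds_of_eventually_within _
      ((by fun_prop : Continuous fun ε : ℝ => (ε : ℂ) * I).tendsto' _ _ rfl |>.mono_left
        nhdsWithin_le_nhds)
      (eventually_nhdsWithin_of_forall fun ε hε => by simpa [I_ne_zero] using hε)
  have hzeros : ∀ᶠ ε : ℝ in 𝓝[≠] ε₁, stieltjesTransform ρ f ν (ε * I) = 0 :=
    eventually_nhdsWithin_of_eventually_nhds
      (eventually_of_mem (Ioo_mem_nhds (half_pos hε₀) (half_lt_self hε₀)) h)
  exact hanalytic.eqOn_zero_of_preconnected_of_frequently_eq_zero (isPreconnected_slitPlaneAt a)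
    hmem (hline.frequently hzeros.frequently)

lemma stieltjesTransform_add_nat_eqOn_zero (hf : Integrable f ρ) (ha : ∀ᵐ t ∂ρ, a ≤ t)
    (hν : 0 < ν) (h : EqOn (stieltjesTransform ρ f ν) 0 (slitPlaneAt a)) (n : ℕ) :
    EqOn (stieltjesTransform ρ f (ν + n)) 0 (slitPlaneAt a) := by
  induction n with
  | zero => simpa using h
  | succ n ih =>
    intro z hz
    have hpos : 0 < ν + n := by positivity
    -- `S_{ν+n}` vanishes near `z`, so its derivative `(ν + n) S_{ν+n+1}(z)` is zero
    have hderiv := (hasDerivAt_stieltjesTransform hf ha hpos.le hz).unique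
      ((hasDerivAt_const z 0).congr_of_eventuallyEq
        (eventually_of_mem ((isOpen_slitPlaneAt a).mem_nhds hz) ih))
    have hne : (ν : ℂ) + n ≠ 0 := by exact_mod_cast hpos.ne'
    simpa [add_assoc, hne] using hderiv

lemma stieltjesTransform_add_nat_ofReal_eq_integral {c : ℝ} (hc : ∀ᵐ t ∂ρ, c < t) (n : ℕ) :
    stieltjesTransform ρ f (ν + n) c
      = ∫ t, (t - c)⁻¹ ^ n • (f t * ((t : ℂ) - c) ^ (-(ν : ℂ))) ∂ρ := by
  refine integral_congr_ae ?_
  filter_upwards [hc] with t ht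
  have hne : (t : ℂ) - c ≠ 0 := by exact_mod_cast (sub_pos.mpr ht).ne'
  rw [real_smul, ofReal_add, neg_add, cpow_add _ _ hne, ofReal_natCast, cpow_neg _ (n : ℂ),
    cpow_natCast]
  push_cast
  ring

end StieltjesTransform

lemma integral_smul_eq_zero_of_forall_approx {α E : Type*} [MeasurableSpace α] {ρ : Measure α}
    [NormedAddCommGroup E] [NormedSpace ℝ E] {g : α → E} {φ : α → ℝ} (hg : Integrable g ρ)
    (hφ : Integrable (fun x => φ x • g x) ρ)
    (happrox : ∀ δ > 0, ∃ ψ : α → ℝ, Integrable (fun x => ψ x • g x) ρ ∧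
      ∫ x, ψ x • g x ∂ρ = 0 ∧ ∀ᵐ x ∂ρ, |φ x - ψ x| ≤ δ) :
    ∫ x, φ x • g x ∂ρ = 0 := by
  set B := ∫ x, ‖g x‖ ∂ρ
  have hB : 0 ≤ B := integral_nonneg fun x => norm_nonneg _
  refine norm_le_zero_iff.mp (le_of_forall_pos_le_add fun η hη => ?_)
  obtain ⟨ψ, hψ, hψ0, hφψ⟩ := happrox (η / (B + 1)) (by positivity)
  calc ‖∫ x, φ x • g x ∂ρ‖ = ‖∫ x, (φ x - ψ x) • g x ∂ρ‖ := by
        simp only [sub_smul, integral_sub hφ hψ, hψ0, sub_zero]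
    _ ≤ ∫ x, η / (B + 1) * ‖g x‖ ∂ρ := by
        refine norm_integral_le_of_norm_le (hg.norm.const_mul _) ?_
        filter_upwards [hφψ] with x hx
        rw [norm_smul, Real.norm_eq_abs]
        gcongr
    _ = η * (B / (B + 1)) := by rw [integral_const_mul]; ring
    _ ≤ 0 + η := by
        rw [zero_add]
        exact mul_le_of_le_one_right hη.le ((div_le_one (by positivity)).mpr (by linarith))

lemma continuousOn_inv_sub_Icc {a b c : ℝ} (hc : c < a) :
    ContinuousOn (fun t => (t - c)⁻¹) (Icc a b) :=
  (continuousOn_id.sub continuousOn_const).inv₀ fun _ ht => (sub_pos.mpr (hc.trans_le ht.1)).ne'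

open Polynomial in
lemma integral_eval_inv_sub_smul_eq_zero {E : Type*} [NormedAddCommGroup E] [NormedSpace ℝ E]
    {a b c : ℝ} (hc : c < a) {g : ℝ → E} (hg : IntegrableOn g (Icc a b))
    (hmom : ∀ n : ℕ, ∫ t in Icc a b, (t - c)⁻¹ ^ n • g t = 0) (p : ℝ[X]) :
    ∫ t in Icc a b, p.eval (t - c)⁻¹ • g t = 0 := by
  have hint : ∀ n : ℕ, IntegrableOn (fun t => p.coeff n • (t - c)⁻¹ ^ n • g t) (Icc a b) :=
    fun n => (hg.continuousOn_smul ((continuousOn_inv_sub_Icc hc).pow n) isCompact_Icc).smul _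
  simp only [eval_eq_sum_range, Finset.sum_smul, mul_smul]
  rw [integral_finsetSum _ fun n _ => hint n]
  exact Finset.sum_eq_zero fun n _ => by rw [integral_smul, hmom, smul_zero]

lemma ae_eq_zero_of_integral_inv_sub_pow_smul_eq_zero {E : Type*} [NormedAddCommGroup E]
    [NormedSpace ℝ E] [CompleteSpace E] {a b c : ℝ} (hc : c < a) {g : ℝ → E}
    (hg : IntegrableOn g (Icc a b)) (hmom : ∀ n : ℕ, ∫ t in Icc a b, (t - c)⁻¹ ^ n • g t = 0) :
    ∀ᵐ t ∂volume.restrict (Icc a b), g t = 0 := by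
  rcases lt_or_ge b a with hba | hab
  · simp [Icc_eq_empty_of_lt hba]
  refine ae_eq_zero_of_integral_contDiff_smul_eq_zero hg.locallyIntegrable fun φ hφ _ =>
    integral_smul_eq_zero_of_forall_approx hg
      (hg.continuousOn_smul hφ.continuous.continuousOn isCompact_Icc) fun δ hδ => ?_
  -- Weierstrass approximation in the variable `s = (t - c)⁻¹`, i.e. `t = c + s⁻¹`
  have hφ' : ContinuousOn (fun s => φ (c + s⁻¹)) (Icc (b - c)⁻¹ (a - c)⁻¹) :=
    hφ.continuous.comp_continuousOn (continuousOn_const.add (continuousOn_id.inv₀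
      fun s hs => ((inv_pos.mpr (by linarith)).trans_le hs.1).ne'))
  obtain ⟨p, hp⟩ := exists_polynomial_near_of_continuousOn _ _ _ hφ' δ hδ
  refine ⟨fun t => p.eval (t - c)⁻¹,
    hg.continuousOn_smul (p.continuous.comp_continuousOn (continuousOn_inv_sub_Icc hc))
      isCompact_Icc, integral_eval_inv_sub_smul_eq_zero hc hg hmom p, ?_⟩
  filter_upwards [ae_restrict_mem measurableSet_Icc] with t ht
  have hs : (t - c)⁻¹ ∈ Icc (b - c)⁻¹ (a - c)⁻¹ :=
    ⟨inv_anti₀ (by linarith [ht.1]) (by linarith [ht.2]),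
      inv_anti₀ (by linarith) (by linarith [ht.1])⟩
  simpa [abs_sub_comm] using (hp _ hs).le

theorem stmt2 (a b μ ε₀ : ℝ)
    (hμ : 0 < μ) (hε₀ : 0 < ε₀) (f : ℝ → ℂ)
    (hf : MemLp f 2 (volume.restrict (Set.Icc a b)))
    (hint : ∀ ε ∈ Set.Ioo (0:ℝ) ε₀,
      ∫ t in Set.Icc a b, f t * ((t : ℂ) - (ε : ℂ) * Complex.I) ^ (-(μ : ℂ)) = 0) :
    ∀ᵐ t ∂(volume.restrict (Set.Icc a b)), f t = 0 := by
  set ρ := volume.restrict (Icc a b)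
  have hρ : ∀ᵐ t ∂ρ, t ∈ Icc a b := ae_restrict_mem measurableSet_Icc
  have ha : ∀ᵐ t ∂ρ, a ≤ t := hρ.mono fun t ht => ht.1
  have hf₁ : Integrable f ρ := hf.integrable one_le_two
  set c := a - 1
  have hc : (c : ℂ) ∈ slitPlaneAt a := by simp [slitPlaneAt, mem_slitPlane_iff, c]
  have hmom (n : ℕ) : ∫ t in Icc a b, (t - c)⁻¹ ^ n • (f t * ((t : ℂ) - c) ^ (-(μ : ℂ))) = 0 := by
    rw [← stieltjesTransform_add_nat_ofReal_eq_integral (ha.mono fun t ht => by linarith) n]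
    exact stieltjesTransform_add_nat_eqOn_zero hf₁ ha hμ
      (stieltjesTransform_eqOn_zero hf₁ ha hμ.le hε₀ hint) n hc
  filter_upwards [ae_eq_zero_of_integral_inv_sub_pow_smul_eq_zero (sub_one_lt a)
    (integrable_mul_sub_cpow_neg hf₁ ha hμ.le hc) hmom, hρ] with t ht htI
  have hne : (t : ℂ) - c ≠ 0 :=
    sub_ne_zero.mpr (by exact_mod_cast (show c < t by linarith [htI.1]).ne')
  exact (mul_eq_zero.mp ht).resolve_right (cpow_ne_zero_iff.mpr (Or.inl hne))
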